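/- arXiv:2004.10005 — 3 statements merged into one kernel-verified Lean document; each statement's English description precedes it below -/
import Mathlib

section
/- On the Hilbert space ℓ²(ℤ⁶) with standard orthonormal basis (e_{i,j,k,l,s,t})_{i,j,k,l,s,t∈ℤ}, let Y₁₂, Y₁₃, Y₂₃ be the unitary operators induced by the bijections Y₁₂ e_{i,j,k,l,s,t} = e_{i,j,k+i+j,l,s,t}, Y₁₃ e_{i,j,k,l,s,t} = e_{i,j,k,l,s+i+j,t}, Y₂₃ e_{i,j,k,l,s,t} = e_{i,j,k,l,s+k+l,t}. Then the pentagon equation Y₂₃ ∘ Y₁₂ = Y₁₂ ∘ Y₁₃ ∘ Y₂₃ holds. -/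
/-!
STATEMENT 1: On ℓ²(ℤ⁶), the unitaries
Y₁₂ e_{i,j,k,l,s,t} = e_{i,j,k+i+j,l,s,t}, Y₁₃ e_{i,j,k,l,s,t} = e_{i,j,k,l,s+i+j,t},
Y₂₃ e_{i,j,k,l,s,t} = e_{i,j,k,l,s+k+l,t}
satisfy the pentagon equation Y₂₃ ∘ Y₁₂ = Y₁₂ ∘ Y₁₃ ∘ Y₂₃.
-/

noncomputable section

/-- The Hilbert space ℓ²(ℤ⁶). -/
abbrev H : Type := lp (fun _ : ℤ × ℤ × ℤ × ℤ × ℤ × ℤ => ℂ) 2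

/-- The standard orthonormal basis vector of ℓ²(ℤ⁶). -/
noncomputable def e (i j k l s t : ℤ) : H := lp.single 2 (i, j, k, l, s, t) 1

lemma single_eq_smul_e (p : ℤ × ℤ × ℤ × ℤ × ℤ × ℤ) (c : ℂ) :
    lp.single (E := fun _ : ℤ × ℤ × ℤ × ℤ × ℤ × ℤ => ℂ) 2 p c
      = c • e p.1 p.2.1 p.2.2.1 p.2.2.2.1 p.2.2.2.2.1 p.2.2.2.2.2 := by
  rw [e]
  rw [← lp.single_smul]
  simp

theorem pentagon_equation_for_Y
    (Y12 Y13 Y23 : H ≃ₗᵢ[ℂ] H)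
    (hY12 : ∀ i j k l s t : ℤ, Y12 (e i j k l s t) = e i j (k + i + j) l s t)
    (hY13 : ∀ i j k l s t : ℤ, Y13 (e i j k l s t) = e i j k l (s + i + j) t)
    (hY23 : ∀ i j k l s t : ℤ, Y23 (e i j k l s t) = e i j k l (s + k + l) t) :
    Y12.trans Y23 = (Y23.trans Y13).trans Y12 := by
  have key : ∀ i j k l s t : ℤ,
      Y23 (Y12 (e i j k l s t)) = Y12 (Y13 (Y23 (e i j k l s t))) := by
    intro i j k l s t
    rw [hY12, hY23, hY23, hY13, hY12]
    ring_nf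
  refine LinearIsometryEquiv.ext fun f => ?_
  have hsum := lp.hasSum_single (E := fun _ : ℤ × ℤ × ℤ × ℤ × ℤ × ℤ => ℂ)
    ENNReal.ofNat_ne_top f
  have h1 : HasSum (fun p : ℤ × ℤ × ℤ × ℤ × ℤ × ℤ =>
      (Y12.trans Y23) (lp.single 2 p (f p))) ((Y12.trans Y23) f) :=
    (Y12.trans Y23).toContinuousLinearEquiv.toContinuousLinearMap.hasSum hsum
  have h2 : HasSum (fun p : ℤ × ℤ × ℤ × ℤ × ℤ × ℤ =>
      ((Y23.trans Y13).trans Y12) (lp.single 2 p (f p)))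
      (((Y23.trans Y13).trans Y12) f) :=
    ((Y23.trans Y13).trans Y12).toContinuousLinearEquiv.toContinuousLinearMap.hasSum hsum
  refine h1.unique ?_
  convert h2 using 2 with p
  rw [single_eq_smul_e]
  simp only [LinearIsometryEquiv.trans_apply, map_smul]
  rw [key]
end
end

section
/- Fix q ∈ ℂ with 0 < |q| < 1 and set ζ := q/conj(q). On ℓ²(ℤ⁶) with standard orthonormal basis (e_{i,j,k,l,s,t}), let Y₁₂ and Y₁₃ be the unitaries induced by e_{i,j,k,l,s,t} ↦ e_{i,j,k+i+j,l,s,t} and e_{i,j,k,l,s,t} ↦ e_{i,j,k,l,s+i+j,t} respectively, and let X₂₃ be the linear operator defined on finitely supported vectors by X₂₃ e_{i,j,k,l,s,t} = ζ^{−l} q^{s−k+1} e_{i,j,k−1,l−1,s−1,t+1}. Then (Y₁₂∘Y₁₃)⁻¹ ∘ X₂₃ ∘ (Y₁₂∘Y₁₃) ξ = X₂₃ ξ for every finitely supported vector ξ; that is, Y₁₂Y₁₃ commutes with X₂₃. -/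
/-!
STATEMENT 7: For q ∈ ℂ with 0 < |q| < 1 and ζ := q/conj(q), on ℓ²(ℤ⁶) the unitary
Y₁₂Y₁₃ commutes with the densely defined operator
X₂₃ e_{i,j,k,l,s,t} = ζ^{−l} q^{s−k+1} e_{i,j,k−1,l−1,s−1,t+1}:
(Y₁₂Y₁₃)⁻¹ ∘ X₂₃ ∘ (Y₁₂Y₁₃) ξ = X₂₃ ξ for every finitely supported ξ.
-/

noncomputable section

/-- The dense subspace of finitely supported vectors in ℓ²(ℤ⁶). -/
abbrev F : Type := (ℤ × ℤ × ℤ × ℤ × ℤ × ℤ) →₀ ℂ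

/-- The standard basis vector of the finitely supported subspace. -/
noncomputable def δ (i j k l s t : ℤ) : F := Finsupp.single (i, j, k, l, s, t) 1

theorem F.linearMap_ext {M : Type*} [AddCommMonoid M] [Module ℂ M] {f g : F →ₗ[ℂ] M}
    (h : ∀ i j k l s t : ℤ, f (δ i j k l s t) = g (δ i j k l s t)) : f = g :=
  Finsupp.lhom_ext' fun ⟨i, j, k, l, s, t⟩ => LinearMap.ext_ring (h i j k l s t)

theorem Y12Y13_commutes_with_X23_general
    (q : ℂ)
    (ζ : ℂ)
    -- the unitaries Y₁₂ and Y₁₃ on ℓ²(ℤ⁶)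
    (Y12 Y13 : H ≃ₗᵢ[ℂ] H)
    (hY12 : ∀ i j k l s t : ℤ, Y12 (e i j k l s t) = e i j (k + i + j) l s t)
    (hY13 : ∀ i j k l s t : ℤ, Y13 (e i j k l s t) = e i j k l (s + i + j) t)
    -- their restrictions to finitely supported vectors
    (Y12f Y13f : F →ₗ[ℂ] F)
    (hY12f : ∀ i j k l s t : ℤ, Y12f (δ i j k l s t) = δ i j (k + i + j) l s t)
    (hY13f : ∀ i j k l s t : ℤ, Y13f (δ i j k l s t) = δ i j k l (s + i + j) t)
    -- the operator X₂₃ on finitely supported vectors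
    (X23 : F →ₗ[ℂ] H)
    (hX23 : ∀ i j k l s t : ℤ, X23 (δ i j k l s t)
      = (ζ ^ (-l) * q ^ (s - k + 1)) • e i j (k - 1) (l - 1) (s - 1) (t + 1)) :
    ∀ ξ : F, Y13.symm (Y12.symm (X23 (Y12f (Y13f ξ)))) = X23 ξ := by
  suffices (Y13.symm.toLinearMap ∘ₗ Y12.symm.toLinearMap ∘ₗ X23 ∘ₗ Y12f ∘ₗ Y13f) = X23 from
    fun ξ => LinearMap.congr_fun this ξ
  refine F.linearMap_ext fun i j k l s t => ?_
  -- the shift by i + j in the third and fifth indices cancels in the exponent s - k + 1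
  have shifted : X23 (Y12f (Y13f (δ i j k l s t)))
      = (ζ ^ (-l) * q ^ (s - k + 1)) • Y12 (Y13 (e i j (k - 1) (l - 1) (s - 1) (t + 1))) := by
    rw [hY13f, hY12f, hX23, hY13, hY12]
    congr 3 <;> ring
  simp [shifted, hX23]

theorem Y12Y13_commutes_with_X23
    (q : ℂ) (hq0 : 0 < ‖q‖) (hq1 : ‖q‖ < 1)
    (ζ : ℂ) (hζ : ζ = q / (starRingEnd ℂ) q)
    -- the unitaries Y₁₂ and Y₁₃ on ℓ²(ℤ⁶)
    (Y12 Y13 : H ≃ₗᵢ[ℂ] H)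
    (hY12 : ∀ i j k l s t : ℤ, Y12 (e i j k l s t) = e i j (k + i + j) l s t)
    (hY13 : ∀ i j k l s t : ℤ, Y13 (e i j k l s t) = e i j k l (s + i + j) t)
    -- their restrictions to finitely supported vectors
    (Y12f Y13f : F →ₗ[ℂ] F)
    (hY12f : ∀ i j k l s t : ℤ, Y12f (δ i j k l s t) = δ i j (k + i + j) l s t)
    (hY13f : ∀ i j k l s t : ℤ, Y13f (δ i j k l s t) = δ i j k l (s + i + j) t)
    -- the operator X₂₃ on finitely supported vectors
    (X23 : F →ₗ[ℂ] H)
    (hX23 : ∀ i j k l s t : ℤ, X23 (δ i j k l s t)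
      = (ζ ^ (-l) * q ^ (s - k + 1)) • e i j (k - 1) (l - 1) (s - 1) (t + 1)) :
    ∀ ξ : F, Y13.symm (Y12.symm (X23 (Y12f (Y13f ξ)))) = X23 ξ :=
  Y12Y13_commutes_with_X23_general q ζ Y12 Y13 hY12 hY13 Y12f Y13f hY12f hY13f X23 hX23
end
end

section
/- Fix q ∈ ℂ with 0 < |q| < 1 and set ζ := q/conj(q). On ℓ²(ℤ⁶) with standard orthonormal basis (e_{i,j,k,l,s,t}), let Y₁₂ be the unitary induced by e_{i,j,k,l,s,t} ↦ e_{i,j,k+i+j,l,s,t}, let Z₂₃ be the diagonal unitary e_{i,j,k,l,s,t} ↦ ζ^{−lt} e_{i,j,k,l,s,t}, let X₁₃ be the linear operator on finitely supported vectors X₁₃ e_{i,j,k,l,s,t} = ζ^{−j} q^{s−i+1} e_{i−1,j−1,k,l,s−1,t+1}, and let D be the linear operator on finitely supported vectors D e_{i,j,k,l,s,t} = ζ^{−l} ζ^{−j} q^{s−i+1} e_{i−1,j−1,k−2,l,s−1,t+1}. Then Y₁₂ ∘ Z₂₃ ∘ X₁₃ ∘ Z₂₃⁻¹ ∘ Y₁₂⁻¹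 ξ = D ξ for every finitely supported vector ξ; that is, Y₁₂Z₂₃X₁₃Z₂₃*Y₁₂* = X₁₃(1⊗v²P⊗1). -/
/-!
Both sides are linear, so it suffices to compare them on the basis vectors `δ`. There every
operator is a weighted shift: `X₁₃` lowers `i` and `j` by one, so conjugating by `Y₁₂` shifts `k`
by `-2`, and it raises `t` by one, so conjugating by `Z₂₃` contributes the phase
`ζ^{lt} ζ^{-l(t+1)} = ζ^{-l}`.
-/

noncomputable section

theorem LinearEquiv.symm_apply_eq_inv_smul_of_apply_eq_smul {K M : Type*} [DivisionRing K]
    [AddCommGroup M] [Module K M] (f : M ≃ₗ[K] M) {x : M} {c : K} (hx : f x = c • x)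
    (hx0 : x ≠ 0) : f.symm x = c⁻¹ • x := by
  have hc : c ≠ 0 := by
    rintro rfl
    exact hx0 (f.map_eq_zero_iff.mp (by rw [hx, zero_smul]))
  rw [f.symm_apply_eq, map_smul, hx, smul_smul, inv_mul_cancel₀ hc, one_smul]

theorem zpow_mul_mul_zpow_neg_mul_add_one {G : Type*} [GroupWithZero G] (ζ : G) (l t : ℤ) :
    ζ ^ (l * t) * ζ ^ (-(l * (t + 1))) = ζ ^ (-l) := by
  rw [← zpow_add']
  · ring_nf
  · by_cases hl : l = 0
    · simp [hl]
    · exact Or.inr (Or.inl (by ring_nf; exact neg_ne_zero.mpr hl))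

theorem δ_ne_zero (i j k l s t : ℤ) : δ i j k l s t ≠ 0 :=
  Finsupp.single_ne_zero.mpr one_ne_zero

theorem linearMap_ext_δ {M : Type*} [AddCommMonoid M] [Module ℂ M] {φ ψ : F →ₗ[ℂ] M}
    (h : ∀ i j k l s t : ℤ, φ (δ i j k l s t) = ψ (δ i j k l s t)) : φ = ψ :=
  Finsupp.lhom_ext' fun ⟨i, j, k, l, s, t⟩ => LinearMap.ext_ring (h i j k l s t)

theorem Y12_Z23_conjugate_of_X13_general
    (q : ℂ)
    (ζ : ℂ)
    -- the unitaries Y₁₂ and Z₂₃ on ℓ²(ℤ⁶)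
    (Y12 Z23 : H ≃ₗᵢ[ℂ] H)
    (hY12 : ∀ i j k l s t : ℤ, Y12 (e i j k l s t) = e i j (k + i + j) l s t)
    (hZ23 : ∀ i j k l s t : ℤ, Z23 (e i j k l s t) = ζ ^ (-(l * t)) • e i j k l s t)
    -- their restrictions to finitely supported vectors
    (Y12f Z23f : F ≃ₗ[ℂ] F)
    (hY12f : ∀ i j k l s t : ℤ, Y12f (δ i j k l s t) = δ i j (k + i + j) l s t)
    (hZ23f : ∀ i j k l s t : ℤ, Z23f (δ i j k l s t) = ζ ^ (-(l * t)) • δ i j k l s t)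
    -- the operators X₁₃ and D = X₁₃(1⊗v²P⊗1) on finitely supported vectors
    (X13 D : F →ₗ[ℂ] H)
    (hX13 : ∀ i j k l s t : ℤ, X13 (δ i j k l s t)
      = (ζ ^ (-j) * q ^ (s - i + 1)) • e (i - 1) (j - 1) k l (s - 1) (t + 1))
    (hD : ∀ i j k l s t : ℤ, D (δ i j k l s t)
      = (ζ ^ (-l) * ζ ^ (-j) * q ^ (s - i + 1)) • e (i - 1) (j - 1) (k - 2) l (s - 1) (t + 1)) :
    ∀ ξ : F, Y12 (Z23 (X13 (Z23f.symm (Y12f.symm ξ)))) = D ξ := by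
  suffices Y12.toLinearEquiv.toLinearMap ∘ₗ Z23.toLinearEquiv.toLinearMap ∘ₗ X13 ∘ₗ
      Z23f.symm.toLinearMap ∘ₗ Y12f.symm.toLinearMap = D from fun ξ => LinearMap.congr_fun this ξ
  refine linearMap_ext_δ fun i j k l s t => ?_
  have hY : Y12f.symm (δ i j k l s t) = δ i j (k - i - j) l s t := by
    rw [Y12f.symm_apply_eq, hY12f]
    congr 2
    ring
  have hZ : Z23f.symm (δ i j (k - i - j) l s t) = ζ ^ (l * t) • δ i j (k - i - j) l s t := by
    rw [Z23f.symm_apply_eq_inv_smul_of_apply_eq_smul (hZ23f ..) (δ_ne_zero _ _ _ _ _ _),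
      zpow_neg, inv_inv]
  simp only [LinearMap.comp_apply, LinearEquiv.coe_coe, LinearIsometryEquiv.coe_toLinearEquiv, hY, hZ,
    map_smul, hX13, hZ23, hY12, hD, smul_smul]
  rw [show k - i - j + (i - 1) + (j - 1) = k - 2 by ring]
  congr 1
  linear_combination (ζ ^ (-j) * q ^ (s - i + 1)) * zpow_mul_mul_zpow_neg_mul_add_one ζ l t

theorem Y12_Z23_conjugate_of_X13
    (q : ℂ) (hq0 : 0 < ‖q‖) (hq1 : ‖q‖ < 1)
    (ζ : ℂ) (hζ : ζ = q / (starRingEnd ℂ) q)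
    -- the unitaries Y₁₂ and Z₂₃ on ℓ²(ℤ⁶)
    (Y12 Z23 : H ≃ₗᵢ[ℂ] H)
    (hY12 : ∀ i j k l s t : ℤ, Y12 (e i j k l s t) = e i j (k + i + j) l s t)
    (hZ23 : ∀ i j k l s t : ℤ, Z23 (e i j k l s t) = ζ ^ (-(l * t)) • e i j k l s t)
    -- their restrictions to finitely supported vectors
    (Y12f Z23f : F ≃ₗ[ℂ] F)
    (hY12f : ∀ i j k l s t : ℤ, Y12f (δ i j k l s t) = δ i j (k + i + j) l s t)
    (hZ23f : ∀ i j k l s t : ℤ, Z23f (δ i j k l s t) = ζ ^ (-(l * t)) • δ i j k l s t)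
    -- the operators X₁₃ and D = X₁₃(1⊗v²P⊗1) on finitely supported vectors
    (X13 D : F →ₗ[ℂ] H)
    (hX13 : ∀ i j k l s t : ℤ, X13 (δ i j k l s t)
      = (ζ ^ (-j) * q ^ (s - i + 1)) • e (i - 1) (j - 1) k l (s - 1) (t + 1))
    (hD : ∀ i j k l s t : ℤ, D (δ i j k l s t)
      = (ζ ^ (-l) * ζ ^ (-j) * q ^ (s - i + 1)) • e (i - 1) (j - 1) (k - 2) l (s - 1) (t + 1)) :
    ∀ ξ : F, Y12 (Z23 (X13 (Z23f.symm (Y12f.symm ξ)))) = D ξ :=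
  Y12_Z23_conjugate_of_X13_general q ζ Y12 Z23 hY12 hZ23 Y12f Z23f hY12f hZ23f X13 D hX13 hD
end
end
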